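/- Let T and T₁ be positive integers with T₁ ≤ T. Let X₁, X₂, … be i.i.d. 1-subgaussian real random variables and Y₁, Y₂, … be i.i.d. 1-subgaussian real random variables, independent of the X's, with Δ = E[X₁ − Y₁] > 0. Write X̄ₛ = (1/s)∑_{n=1}^s Xₙ and Ȳₛ = (1/s)∑_{n=1}^s Yₙ. Then ∑_{s=1}^{⌊T/2⌋} P(X̄ₛ − Ȳₛ ≤ √((8/s)·log⁺(T₁/(2s)))) ≤ 1 + 8·log⁺(T₁Δ²/4)/Δ² + 6/Δ² + 2√(8π·log⁺(T₁Δ²/4))/Δ². -/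

import Mathlib

open MeasureTheory ProbabilityTheory Real
open scoped ENNReal

/-- `Z` is 1-subgaussian: `E[exp(λZ − λE[Z])] ≤ exp(λ²/2)` for all `λ ∈ ℝ`
(with the integrability of the moment generating function). -/
def IsOneSubgaussian {Ω : Type*} [MeasurableSpace Ω] (μ : Measure Ω) (Z : Ω → ℝ) : Prop :=
  Integrable Z μ ∧ ∀ l : ℝ,
    Integrable (fun ω => Real.exp (l * Z ω - l * (∫ ω', Z ω' ∂μ))) μ ∧
    (∫ ω, Real.exp (l * Z ω - l * (∫ ω', Z ω' ∂μ)) ∂μ) ≤ Real.exp (l ^ 2 / 2)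

/-- `log⁺ x = max {0, log x}`. -/
noncomputable def logPlus (x : ℝ) : ℝ := max 0 (Real.log x)

/-!
`X̄ₛ - Ȳₛ - Δ` is `1/s` times a sum of `2s` independent centred 1-subgaussian variables, so for
`e ≤ Δ` Hoeffding gives `P(X̄ₛ - Ȳₛ ≤ e) ≤ exp(-s(Δ - e)²/4)`. Put `c = log⁺(T₁Δ²/4)`. As soon as
`Δ²s ≥ 8c + 2`, the threshold `√((8/s) log⁺(T₁/(2s)))` is at most `√(8c/s) ≤ Δ`, so the summand is
at most `exp(-(Δ√s - √(8c))²/4)`. The first `⌈(8c + 2)/Δ²⌉` summands are bounded by `1`; the rest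
is compared with an integral, which the substitution `u = Δ√x - √(8c)` turns into
`(2/Δ²) ∫₀^∞ (u + √(8c)) e^{-u²/4} du = (2/Δ²)(2 + √(8πc))`.
-/

open Finset

lemma logPlus_nonneg (x : ℝ) : 0 ≤ logPlus x := le_max_left _ _

lemma logPlus_le_logPlus {x y : ℝ} (hx : 0 ≤ x) (h : x ≤ y) : logPlus x ≤ logPlus y := by
  rcases hx.eq_or_lt with rfl | hx
  · simp [logPlus]
  · exact max_le_max le_rfl (Real.log_le_log hx h)

lemma le_mul_sqrt_of_sq_le_sq_mul {Δ B s : ℝ} (hΔ : 0 ≤ Δ) (h : B ^ 2 ≤ Δ ^ 2 * s) :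
    B ≤ Δ * √s := by
  rw [← sqrt_sq hΔ, ← sqrt_mul (sq_nonneg _)]
  exact le_sqrt_of_sq_le h

lemma sq_mul_sqrt_sub_le_mul_sq_sub {Δ B e s : ℝ} (hs : 0 ≤ s) (hBs : B ≤ Δ * √s)
    (he : √s * e ≤ B) : (Δ * √s - B) ^ 2 ≤ s * (Δ - e) ^ 2 := by
  have h : Δ * √s - B ≤ √s * (Δ - e) := by linarith [mul_comm Δ √s, mul_sub √s Δ e]
  calc (Δ * √s - B) ^ 2 ≤ (√s * (Δ - e)) ^ 2 := pow_le_pow_left₀ (sub_nonneg.2 hBs) h 2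
    _ = s * (Δ - e) ^ 2 := by rw [mul_pow, sq_sqrt hs]

lemma integral_Ioi_mul_exp_neg_mul_sq {b : ℝ} (hb : 0 < b) :
    ∫ r in Set.Ioi (0 : ℝ), r * exp (-b * r ^ 2) = (2 * b)⁻¹ := by
  have h := integral_mul_cexp_neg_mul_sq (b := (b : ℂ)) (by simpa using hb)
  rw [← Complex.ofReal_inj, ← integral_complex_ofReal]
  push_cast
  exact h

lemma integral_Ioi_add_mul_exp_neg_sq_div_four (B : ℝ) :
    ∫ u in Set.Ioi (0 : ℝ), (u + B) * exp (-u ^ 2 / 4) = 2 + B * √π := by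
  have hexp : ∀ u : ℝ, exp (-u ^ 2 / 4) = exp (-(1 / 4) * u ^ 2) := fun u => by ring_nf
  have h1 := integrable_mul_exp_neg_mul_sq (b := 1 / 4) (by norm_num)
  have h2 := (integrable_exp_neg_mul_sq (b := 1 / 4) (by norm_num)).const_mul B
  simp_rw [hexp, add_mul]
  rw [integral_add h1.integrableOn h2.integrableOn, integral_const_mul,
    integral_Ioi_mul_exp_neg_mul_sq (by norm_num), integral_gaussian_Ioi]
  have : √(π / (1 / 4)) = 2 * √π := by
    rw [div_div_eq_mul_div, div_one, mul_comm, sqrt_mul (by norm_num),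
      show (4 : ℝ) = 2 ^ 2 by norm_num, sqrt_sq (by norm_num)]
  rw [this]
  ring

lemma integral_exp_neg_sq_mul_sqrt_sub_le {Δ B a b : ℝ} (hΔ : 0 < Δ) (hB : 0 ≤ B) (ha : 0 ≤ a)
    (hBa : B ≤ Δ * √a) (hab : a ≤ b) :
    ∫ x in a..b, exp (-(Δ * √x - B) ^ 2 / 4) ≤ 2 * (2 + B * √π) / Δ ^ 2 := by
  set f : ℝ → ℝ := fun u => ((u + B) / Δ) ^ 2
  set α := Δ * √a - B
  set β := Δ * √b - B
  have hα : 0 ≤ α := sub_nonneg.2 hBa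
  have hαβ : α ≤ β := sub_le_sub_right (mul_le_mul_of_nonneg_left (sqrt_le_sqrt hab) hΔ.le) B
  have hf : ∀ x, 0 ≤ x → f (Δ * √x - B) = x := fun x hx => by
    simp only [f, sub_add_cancel, mul_div_cancel_left₀ _ hΔ.ne', sq_sqrt hx]
  have hsqrt : ∀ u, 0 ≤ u → Δ * √(f u) - B = u := fun u hu => by
    rw [sqrt_sq (by positivity), mul_div_cancel₀ _ hΔ.ne', add_sub_cancel_right]
  have hderiv : ∀ u ∈ Set.uIcc α β, HasDerivAt f (2 / Δ ^ 2 * (u + B)) u := fun u _ => by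
    have h : HasDerivAt (fun u => (u + B) / Δ) (1 / Δ) u :=
      ((hasDerivAt_id' u).add_const B).div_const Δ
    exact (h.pow 2).congr_deriv (by push_cast; ring)
  have hint : IntegrableOn (fun u : ℝ => (u + B) * exp (-u ^ 2 / 4)) (Set.Ioi 0) := by
    refine (((integrable_mul_exp_neg_mul_sq (b := 1 / 4) (by norm_num)).add
      ((integrable_exp_neg_mul_sq (b := 1 / 4) (by norm_num)).const_mul B)).congr
      (ae_of_all _ fun u => ?_)).integrableOn
    simp only [Pi.add_apply]
    ring_nf
  calc ∫ x in a..b, exp (-(Δ * √x - B) ^ 2 / 4)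
      = ∫ u in α..β, exp (-(Δ * √(f u) - B) ^ 2 / 4) * (2 / Δ ^ 2 * (u + B)) := by
        have h := intervalIntegral.integral_comp_mul_deriv
          (g := fun x => exp (-(Δ * √x - B) ^ 2 / 4)) hderiv (by fun_prop) (by fun_prop)
        rw [hf a ha, hf b (ha.trans hab)] at h
        exact h.symm
    _ = 2 / Δ ^ 2 * ∫ u in α..β, (u + B) * exp (-u ^ 2 / 4) := by
        rw [← intervalIntegral.integral_const_mul]
        refine intervalIntegral.integral_congr fun u hu => ?_
        rw [Set.uIcc_of_le hαβ] at hu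
        simp only [hsqrt u (hα.trans hu.1)]
        ring
    _ ≤ 2 / Δ ^ 2 * ∫ u in Set.Ioi 0, (u + B) * exp (-u ^ 2 / 4) := by
        gcongr
        rw [intervalIntegral.integral_of_le hαβ]
        refine setIntegral_mono_set hint ?_ ?_
        · exact (ae_restrict_iff' measurableSet_Ioi).2
            (ae_of_all _ fun u (hu : 0 < u) => by positivity)
        · exact (Set.Ioc_subset_Ioi_self.trans (Set.Ioi_subset_Ioi hα)).eventuallyLE
    _ = 2 * (2 + B * √π) / Δ ^ 2 := by
        rw [integral_Ioi_add_mul_exp_neg_sq_div_four]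
        ring

lemma sum_Ioc_exp_neg_sq_mul_sqrt_sub_le {Δ B : ℝ} (hΔ : 0 < Δ) (hB : 0 ≤ B) {m M : ℕ}
    (hm : B ≤ Δ * √m) :
    ∑ s ∈ Ioc m M, exp (-(Δ * √s - B) ^ 2 / 4) ≤ 2 * (2 + B * √π) / Δ ^ 2 := by
  rcases le_or_gt m M with hmM | hMm
  · have hanti : AntitoneOn (fun x : ℝ => exp (-(Δ * √x - B) ^ 2 / 4)) (Set.Icc m M) := by
      intro x hx y _ hxy
      have hBx : B ≤ Δ * √x := hm.trans (by gcongr; exact hx.1)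
      have hxy' : Δ * √x ≤ Δ * √y := by gcongr
      exact exp_le_exp.2 (by nlinarith)
    calc ∑ s ∈ Ioc m M, exp (-(Δ * √s - B) ^ 2 / 4)
        = ∑ i ∈ Ico m M, exp (-(Δ * √(i + 1 : ℕ) - B) ^ 2 / 4) := by
          rw [← Finset.Ico_add_one_add_one_eq_Ioc, ← Finset.sum_Ico_add']
      _ ≤ ∫ x in (m : ℝ)..M, exp (-(Δ * √x - B) ^ 2 / 4) := hanti.sum_le_integral_Ico hmM
      _ ≤ 2 * (2 + B * √π) / Δ ^ 2 :=
          integral_exp_neg_sq_mul_sqrt_sub_le hΔ hB (Nat.cast_nonneg m) hm (by exact_mod_cast hmM)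
  · rw [Ioc_eq_empty (by omega), sum_empty]
    positivity

lemma sum_Icc_le_of_le_exp_neg_sq_mul_sqrt_sub {Δ B : ℝ} (hΔ : 0 < Δ) (hB : 0 ≤ B)
    {p : ℕ → ℝ} (hp0 : ∀ s, 0 ≤ p s) (hp1 : ∀ s, p s ≤ 1)
    (hpG : ∀ s : ℕ, B ^ 2 + 2 ≤ Δ ^ 2 * s → p s ≤ exp (-(Δ * √s - B) ^ 2 / 4)) (N : ℕ) :
    ∑ s ∈ Icc 1 N, p s ≤ 1 + (B ^ 2 + 6 + 2 * B * √π) / Δ ^ 2 := by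
  set m := ⌈(B ^ 2 + 2) / Δ ^ 2⌉₊
  have hm : B ^ 2 + 2 ≤ Δ ^ 2 * m := by
    rw [mul_comm, ← div_le_iff₀ (by positivity)]
    exact Nat.le_ceil _
  have hm' : (m : ℝ) < (B ^ 2 + 2) / Δ ^ 2 + 1 := Nat.ceil_lt_add_one (by positivity)
  have hBm : B ≤ Δ * √m := le_mul_sqrt_of_sq_le_sq_mul hΔ.le (by linarith)
  calc ∑ s ∈ Icc 1 N, p s ≤ ∑ s ∈ Ioc 0 m ∪ Ioc m N, p s :=
        sum_le_sum_of_subset_of_nonneg (fun s => by simp only [mem_Icc, mem_union, mem_Ioc]; omega)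
          fun s _ _ => hp0 s
    _ = ∑ s ∈ Ioc 0 m, p s + ∑ s ∈ Ioc m N, p s :=
        sum_union (disjoint_left.2 fun s => by simp only [mem_Ioc]; omega)
    _ ≤ ∑ s ∈ Ioc 0 m, 1 + ∑ s ∈ Ioc m N, exp (-(Δ * √s - B) ^ 2 / 4) := by
        gcongr with s _ s hs
        · exact hp1 s
        · exact hpG s (hm.trans (by gcongr; exact (mem_Ioc.1 hs).1.le))
    _ ≤ m + 2 * (2 + B * √π) / Δ ^ 2 := by
        gcongr
        · simp
        · exact sum_Ioc_exp_neg_sq_mul_sqrt_sub_le hΔ hB hBm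
    _ ≤ 1 + (B ^ 2 + 6 + 2 * B * √π) / Δ ^ 2 := by
        have : (B ^ 2 + 6 + 2 * B * √π) / Δ ^ 2
            = (B ^ 2 + 2) / Δ ^ 2 + 2 * (2 + B * √π) / Δ ^ 2 := by ring
        linarith

section Hoeffding

variable {Ω : Type*} [MeasurableSpace Ω] {μ : Measure Ω}

lemma IsOneSubgaussian.hasSubgaussianMGF {Z : Ω → ℝ} (h : IsOneSubgaussian μ Z) :
    HasSubgaussianMGF (fun ω => Z ω - ∫ ω', Z ω' ∂μ) 1 μ where
  integrable_exp_mul t := by simpa only [mul_sub] using (h.2 t).1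
  mgf_le t := by simpa only [mgf, mul_sub, NNReal.coe_one, one_mul] using (h.2 t).2

variable {X Y : ℕ → Ω → ℝ} (hindep : iIndepFun (Sum.elim X Y) μ) {a b : ℝ}
  (hX : ∀ i, HasSubgaussianMGF (fun ω => X i ω - a) 1 μ)
  (hY : ∀ i, HasSubgaussianMGF (fun ω => Y i ω - b) 1 μ)
include hindep hX hY

lemma measureReal_mean_sub_mean_le_le {s : ℕ} (hs : 0 < s) {e : ℝ} (he : e ≤ a - b) :
    μ.real {ω | (∑ n ∈ range s, X n ω) / s - (∑ n ∈ range s, Y n ω) / s ≤ e}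
      ≤ exp (-s * (a - b - e) ^ 2 / 4) := by
  -- signs chosen so that the event is an upper tail of `∑ W`
  set W : ℕ ⊕ ℕ → Ω → ℝ := Sum.elim (fun n ω => a - X n ω) (fun n ω => Y n ω - b)
  have hW : iIndepFun W μ := by
    have := hindep.comp (Sum.elim (fun _ x => a - x) (fun _ x => x - b))
      (by rintro (i | i) <;> simp only [Sum.elim_inl, Sum.elim_inr] <;> fun_prop)
    convert this using 1
    ext (i | i) ω <;> rfl
  have hWsub : ∀ i ∈ (range s).disjSum (range s), HasSubgaussianMGF (W i) 1 μ := by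
    rintro (i | i) -
    · exact (hX i).neg.congr (ae_of_all _ fun ω => by simp [W])
    · exact hY i
  have hs' : (0 : ℝ) < s := by exact_mod_cast hs
  have hset : {ω | (∑ n ∈ range s, X n ω) / s - (∑ n ∈ range s, Y n ω) / s ≤ e}
      = {ω | s * (a - b - e) ≤ ∑ i ∈ (range s).disjSum (range s), W i ω} := by
    ext ω
    simp only [Set.mem_ofPred_eq, sum_disjSum, W, Sum.elim_inl, Sum.elim_inr, sum_sub_distrib,
      sum_const, card_range, nsmul_eq_mul, ← sub_div, div_le_iff₀ hs']
    constructor <;> intro h <;> linarith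
  rw [hset]
  refine (HasSubgaussianMGF.measure_sum_ge_le_of_iIndepFun hW hWsub
    (mul_nonneg hs'.le (sub_nonneg.2 he))).trans_eq ?_
  simp only [sum_const, card_disjSum, card_range]
  congr 1
  push_cast
  field_simp
  ring

lemma measureReal_mean_sub_mean_le_sqrt_logPlus_le {Δ : ℝ} (hΔ : Δ = a - b) (hΔ0 : 0 ≤ Δ)
    {T₁ : ℝ} (hT₁ : 0 ≤ T₁) {s : ℕ} (hs : 8 * logPlus (T₁ * Δ ^ 2 / 4) + 2 ≤ Δ ^ 2 * s) :
    μ.real {ω | (∑ n ∈ range s, X n ω) / s - (∑ n ∈ range s, Y n ω) / s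
        ≤ √((8 / s) * logPlus (T₁ / (2 * s)))}
      ≤ exp (-(Δ * √s - √(8 * logPlus (T₁ * Δ ^ 2 / 4))) ^ 2 / 4) := by
  set c := logPlus (T₁ * Δ ^ 2 / 4)
  set e := √((8 / s) * logPlus (T₁ / (2 * s)))
  have hc : 0 ≤ c := logPlus_nonneg _
  have hs0 : (0 : ℝ) < s := pos_of_mul_pos_right (by linarith) (sq_nonneg Δ)
  have hL : logPlus (T₁ / (2 * s)) ≤ c := by
    refine logPlus_le_logPlus (by positivity) ?_
    rw [div_le_div_iff₀ (by positivity) (by norm_num)]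
    nlinarith
  have hBs : √(8 * c) ≤ Δ * √s :=
    le_mul_sqrt_of_sq_le_sq_mul hΔ0 (by rw [sq_sqrt (by positivity)]; linarith)
  have he : √s * e ≤ √(8 * c) := by
    rw [← sqrt_mul hs0.le]
    have h8 : (s : ℝ) * (8 / s * logPlus (T₁ / (2 * s))) = 8 * logPlus (T₁ / (2 * s)) := by
      field_simp
    exact sqrt_le_sqrt (by linarith)
  have heΔ : e ≤ a - b := by
    rw [← hΔ]
    exact le_of_mul_le_mul_left (by linarith [mul_comm Δ √s]) (sqrt_pos.2 hs0)
  refine (measureReal_mean_sub_mean_le_le hindep hX hY (by exact_mod_cast hs0) heΔ).trans ?_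
  rw [← hΔ]
  have := sq_mul_sqrt_sub_le_mul_sq_sub hs0.le hBs he
  exact exp_le_exp.2 (by linarith)

end Hoeffding

theorem stmt18_general {Ω : Type*} [MeasurableSpace Ω] (μ : Measure Ω) [IsProbabilityMeasure μ]
    (X Y : ℕ → Ω → ℝ)
    (hindep : iIndepFun (Sum.elim X Y) μ)
    (hidentX : ∀ i, IdentDistrib (X i) (X 0) μ μ)
    (hidentY : ∀ i, IdentDistrib (Y i) (Y 0) μ μ)
    (hsubX : ∀ i, IsOneSubgaussian μ (X i))
    (hsubY : ∀ i, IsOneSubgaussian μ (Y i))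
    (T T₁ : ℕ)
    (Δ : ℝ) (hΔ : Δ = ∫ ω, (X 0 ω - Y 0 ω) ∂μ) (hΔpos : 0 < Δ) :
    (∑ s ∈ Finset.Icc 1 (T / 2),
        μ {ω | (∑ n ∈ Finset.range s, X n ω) / s - (∑ n ∈ Finset.range s, Y n ω) / s
            ≤ Real.sqrt ((8 / s) * logPlus ((T₁ : ℝ) / (2 * s)))}) ≤
      ENNReal.ofReal (1 + 8 * logPlus (T₁ * Δ ^ 2 / 4) / Δ ^ 2 + 6 / Δ ^ 2
        + 2 * Real.sqrt (8 * Real.pi * logPlus (T₁ * Δ ^ 2 / 4)) / Δ ^ 2) := by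
  set c := logPlus (T₁ * Δ ^ 2 / 4)
  have hc : 0 ≤ 8 * c := mul_nonneg (by norm_num) (logPlus_nonneg _)
  have hX i : HasSubgaussianMGF (fun ω => X i ω - ∫ ω, X 0 ω ∂μ) 1 μ :=
    (hidentX i).integral_eq ▸ (hsubX i).hasSubgaussianMGF
  have hY i : HasSubgaussianMGF (fun ω => Y i ω - ∫ ω, Y 0 ω ∂μ) 1 μ :=
    (hidentY i).integral_eq ▸ (hsubY i).hasSubgaussianMGF
  have hΔ' : Δ = ∫ ω, X 0 ω ∂μ - ∫ ω, Y 0 ω ∂μ :=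
    hΔ.trans (integral_sub (hsubX 0).1 (hsubY 0).1)
  rw [← ENNReal.ofReal_toReal (ENNReal.sum_ne_top.2 fun _ _ => measure_ne_top μ _),
    ENNReal.toReal_sum fun _ _ => measure_ne_top μ _]
  refine ENNReal.ofReal_le_ofReal ((sum_Icc_le_of_le_exp_neg_sq_mul_sqrt_sub (B := √(8 * c))
    hΔpos (sqrt_nonneg _) (fun _ => measureReal_nonneg) (fun _ => measureReal_le_one)
    (fun s hs => ?_) _).trans_eq ?_)
  · exact measureReal_mean_sub_mean_le_sqrt_logPlus_le hindep hX hY hΔ' hΔpos.le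
      (Nat.cast_nonneg T₁) (by rwa [sq_sqrt hc] at hs)
  · rw [sq_sqrt hc, mul_assoc, ← sqrt_mul hc, show 8 * c * π = 8 * π * c by ring]
    ring

/-- Let `T₁ ≤ T` be positive integers, `X₁, X₂, …` i.i.d. 1-subgaussian, `Y₁, Y₂, …`
i.i.d. 1-subgaussian and independent of the `X`'s, with `Δ = E[X₁ − Y₁] > 0`.  With
`X̄ₛ, Ȳₛ` the empirical means,
`∑_{s=1}^{⌊T/2⌋} P(X̄ₛ − Ȳₛ ≤ √((8/s)·log⁺(T₁/(2s))))
  ≤ 1 + 8·log⁺(T₁Δ²/4)/Δ² + 6/Δ² + 2√(8π·log⁺(T₁Δ²/4))/Δ²`. -/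
theorem stmt18 {Ω : Type*} [MeasurableSpace Ω] (μ : Measure Ω) [IsProbabilityMeasure μ]
    (X Y : ℕ → Ω → ℝ) (hmeasX : ∀ i, Measurable (X i)) (hmeasY : ∀ i, Measurable (Y i))
    (hindep : iIndepFun (Sum.elim X Y) μ)
    (hidentX : ∀ i, IdentDistrib (X i) (X 0) μ μ)
    (hidentY : ∀ i, IdentDistrib (Y i) (Y 0) μ μ)
    (hsubX : ∀ i, IsOneSubgaussian μ (X i))
    (hsubY : ∀ i, IsOneSubgaussian μ (Y i))
    (T T₁ : ℕ) (hT₁ : 0 < T₁) (hT₁T : T₁ ≤ T)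
    (Δ : ℝ) (hΔ : Δ = ∫ ω, (X 0 ω - Y 0 ω) ∂μ) (hΔpos : 0 < Δ) :
    (∑ s ∈ Finset.Icc 1 (T / 2),
        μ {ω | (∑ n ∈ Finset.range s, X n ω) / s - (∑ n ∈ Finset.range s, Y n ω) / s
            ≤ Real.sqrt ((8 / s) * logPlus ((T₁ : ℝ) / (2 * s)))}) ≤
      ENNReal.ofReal (1 + 8 * logPlus (T₁ * Δ ^ 2 / 4) / Δ ^ 2 + 6 / Δ ^ 2
        + 2 * Real.sqrt (8 * Real.pi * logPlus (T₁ * Δ ^ 2 / 4)) / Δ ^ 2) :=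
  stmt18_general μ X Y hindep hidentX hidentY hsubX hsubY T T₁ Δ hΔ hΔpos
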